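/- (Symplectic realization, d ≠ 0) Define φ : ℝ⁴ → ℝ³ by φ(q1,q2,p1,p2) = (x,y,z) with x = p1/a + (1/(2ad))(a p2 − p1² + 4b²c²q1²) − d/a, y = c q1 + (1/(4bd))(a p2 − p1² + 4b²c²q1²), z = b q1 − (1/(4cd))(a p2 − p1² + 4b²c²q1²). If a differentiable curve (q1(t),q2(t),p1(t),p2(t)) satisfies Hamilton's equations q̇1 = (1/(4bcd))p1(a p2 − p1² + 4b²c²q1²), q̇2 = −(a/(8bcd))(a p2 − p1² + 4b²c²q1²), ṗ1 = −2bcd q1 + (bc/d)(a p2 − p1² + 4b²c²q1²)q1, ṗ2 = 0, then (x(t),y(t),z(t)) = φ(q1(t),q2(t),p1(t),p2(t)) satisfies the system ẋ = x(by+cz), ẏ = y(ax−by+cz+d), ż = z(−ax+by−cz−d). -/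

import Mathlib

/-!
Put `F = quad a b c q₁ p₁ p₂ = a p₂ - p₁² + 4 b² c² q₁²`. Along Hamilton's equations
`F' = 4 b c d p₁ q₁`, and `x, y, z` are affine in `p₁, q₁, F`. The combinations
`b y + c z = 2 b c q₁` and `a x - b y + c z + d = p₁` turn system (1.1) into
`x' = 2 b c q₁ x`, `y' = p₁ y`, `z' = -p₁ z`, which follow from the derivatives of `p₁, q₁, F`.
-/

namespace SymplecticRealization

variable {a b c d : ℝ}

def quad (a b c q p₁ p₂ : ℝ) : ℝ := a * p₂ - p₁ ^ 2 + 4 * b ^ 2 * c ^ 2 * q ^ 2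

section Algebra

variable {x y z q p F : ℝ}

theorem b_mul_add_c_mul (hb : b ≠ 0) (hc : c ≠ 0)
    (hy : y = c * q + 1 / (4 * b * d) * F) (hz : z = b * q - 1 / (4 * c * d) * F) :
    b * y + c * z = 2 * b * c * q := by
  subst hy hz
  field_simp
  ring

theorem a_mul_sub_b_mul_add_c_mul_add (ha : a ≠ 0) (hb : b ≠ 0) (hc : c ≠ 0)
    (hx : x = p / a + 1 / (2 * a * d) * F - d / a)
    (hy : y = c * q + 1 / (4 * b * d) * F) (hz : z = b * q - 1 / (4 * c * d) * F) :
    a * x - b * y + c * z + d = p := by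
  subst hx hy hz
  field_simp
  ring

end Algebra

section Derivatives

variable {q₁ p₁ p₂ : ℝ → ℝ} {t : ℝ}

theorem hasDerivAt_quad (hd : d ≠ 0)
    (hq₁ : HasDerivAt q₁ (1 / (4 * b * c * d) * p₁ t * quad a b c (q₁ t) (p₁ t) (p₂ t)) t)
    (hp₁ : HasDerivAt p₁
      (-(2 * b * c * d * q₁ t) + b * c / d * quad a b c (q₁ t) (p₁ t) (p₂ t) * q₁ t) t)
    (hp₂ : HasDerivAt p₂ 0 t) :
    HasDerivAt (fun s => quad a b c (q₁ s) (p₁ s) (p₂ s)) (4 * b * c * d * (p₁ t * q₁ t)) t := by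
  refine (((hp₂.const_mul a).sub (hp₁.pow 2)).add ((hq₁.pow 2).const_mul _)).congr_deriv ?_
  simp only [quad]
  field_simp
  ring

theorem hasDerivAt_x {x : ℝ → ℝ} (hd : d ≠ 0)
    (hF : HasDerivAt (fun s => quad a b c (q₁ s) (p₁ s) (p₂ s))
      (4 * b * c * d * (p₁ t * q₁ t)) t)
    (hp₁ : HasDerivAt p₁
      (-(2 * b * c * d * q₁ t) + b * c / d * quad a b c (q₁ t) (p₁ t) (p₂ t) * q₁ t) t)
    (hx : ∀ s, x s = p₁ s / a + 1 / (2 * a * d) * quad a b c (q₁ s) (p₁ s) (p₂ s) - d / a) :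
    HasDerivAt x (2 * b * c * q₁ t * x t) t := by
  rw [funext hx]
  refine (((hp₁.div_const a).add (hF.const_mul _)).sub_const _).congr_deriv ?_
  field_simp
  ring

theorem hasDerivAt_y {y : ℝ → ℝ} (hb : b ≠ 0) (hc : c ≠ 0) (hd : d ≠ 0)
    (hF : HasDerivAt (fun s => quad a b c (q₁ s) (p₁ s) (p₂ s))
      (4 * b * c * d * (p₁ t * q₁ t)) t)
    (hq₁ : HasDerivAt q₁ (1 / (4 * b * c * d) * p₁ t * quad a b c (q₁ t) (p₁ t) (p₂ t)) t)
    (hy : ∀ s, y s = c * q₁ s + 1 / (4 * b * d) * quad a b c (q₁ s) (p₁ s) (p₂ s)) :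
    HasDerivAt y (y t * p₁ t) t := by
  rw [funext hy]
  refine ((hq₁.const_mul c).add (hF.const_mul _)).congr_deriv ?_
  field_simp
  ring

theorem hasDerivAt_z {z : ℝ → ℝ} (hb : b ≠ 0) (hc : c ≠ 0) (hd : d ≠ 0)
    (hF : HasDerivAt (fun s => quad a b c (q₁ s) (p₁ s) (p₂ s))
      (4 * b * c * d * (p₁ t * q₁ t)) t)
    (hq₁ : HasDerivAt q₁ (1 / (4 * b * c * d) * p₁ t * quad a b c (q₁ t) (p₁ t) (p₂ t)) t)
    (hz : ∀ s, z s = b * q₁ s - 1 / (4 * c * d) * quad a b c (q₁ s) (p₁ s) (p₂ s)) :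
    HasDerivAt z (z t * -p₁ t) t := by
  rw [funext hz]
  refine ((hq₁.const_mul b).sub (hF.const_mul _)).congr_deriv ?_
  field_simp
  ring

end Derivatives

end SymplecticRealization

open SymplecticRealization in
theorem hamilton_to_system_d (a b c d : ℝ)
    (ha : a ≠ 0) (hb : b ≠ 0) (hc : c ≠ 0) (hd : d ≠ 0)
    (q₁ p₁ p₂ : ℝ → ℝ)
    (hq₁ : ∀ t, HasDerivAt q₁
      (1 / (4 * b * c * d) * p₁ t
        * (a * p₂ t - (p₁ t) ^ 2 + 4 * b ^ 2 * c ^ 2 * (q₁ t) ^ 2)) t)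
    (hp₁ : ∀ t, HasDerivAt p₁
      (-(2 * b * c * d * q₁ t)
        + b * c / d * (a * p₂ t - (p₁ t) ^ 2 + 4 * b ^ 2 * c ^ 2 * (q₁ t) ^ 2) * q₁ t) t)
    (hp₂ : ∀ t, HasDerivAt p₂ 0 t)
    (x y z : ℝ → ℝ)
    (hx : ∀ t, x t = p₁ t / a
      + 1 / (2 * a * d) * (a * p₂ t - (p₁ t) ^ 2 + 4 * b ^ 2 * c ^ 2 * (q₁ t) ^ 2)
      - d / a)
    (hy : ∀ t, y t = c * q₁ t
      + 1 / (4 * b * d) * (a * p₂ t - (p₁ t) ^ 2 + 4 * b ^ 2 * c ^ 2 * (q₁ t) ^ 2))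
    (hz : ∀ t, z t = b * q₁ t
      - 1 / (4 * c * d) * (a * p₂ t - (p₁ t) ^ 2 + 4 * b ^ 2 * c ^ 2 * (q₁ t) ^ 2)) :
    (∀ t, HasDerivAt x (x t * (b * y t + c * z t)) t)
    ∧ (∀ t, HasDerivAt y (y t * (a * x t - b * y t + c * z t + d)) t)
    ∧ (∀ t, HasDerivAt z (z t * (-(a * x t) + b * y t - c * z t - d)) t) := by
  have hF t := hasDerivAt_quad hd (hq₁ t) (hp₁ t) (hp₂ t)
  have hp t := a_mul_sub_b_mul_add_c_mul_add ha hb hc (hx t) (hy t) (hz t)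
  refine ⟨fun t => ?_, fun t => ?_, fun t => ?_⟩
  · rw [b_mul_add_c_mul hb hc (hy t) (hz t), mul_comm]
    exact hasDerivAt_x hd (hF t) (hp₁ t) hx
  · rw [hp t]
    exact hasDerivAt_y hb hc hd (hF t) (hq₁ t) hy
  · rw [show -(a * x t) + b * y t - c * z t - d = -p₁ t by linarith [hp t]]
    exact hasDerivAt_z hb hc hd (hF t) (hq₁ t) hz
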